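/- For every positive integer m and every μ > 0, α_m(μ) is the unique negative value of α for which h_{m,μ,α} has a repeated real root: for α < 0, there exists z ∈ ℝ with h_{m,μ,α}(z) = 0 and h′_{m,μ,α}(z) = 0 if and only if α = α_m(μ). -/

import Mathlib

/-- The characteristic quartic `h_{m,μ,α}(z) = z⁴ − 2m²z² − αz + m⁴ + μm²` of the ODE
`ψ⁗ − 2m²ψ″ − αψ′ + (m⁴ + μm²)ψ = 0`. -/
noncomputable def hQuartic (m : ℕ) (μ α : ℝ) : ℝ → ℝ :=
  fun z => z ^ 4 - 2 * (m : ℝ) ^ 2 * z ^ 2 - α * z + (m : ℝ) ^ 4 + μ * (m : ℝ) ^ 2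

/-- The critical value
`α_m(μ) = −(4m/(3√3)) (√(4m² + 3μ) − 2m) √(m² + m√(4m² + 3μ))`. -/
noncomputable def alphaCrit (m : ℕ) (μ : ℝ) : ℝ :=
  -(4 * (m : ℝ) / (3 * Real.sqrt 3)) * (Real.sqrt (4 * (m : ℝ) ^ 2 + 3 * μ) - 2 * (m : ℝ)) *
    Real.sqrt ((m : ℝ) ^ 2 + (m : ℝ) * Real.sqrt (4 * (m : ℝ) ^ 2 + 3 * μ))

/-!
At a repeated root `z`, `h' z = 0` gives `α = 4z(z² − m²)`, and eliminating `α` from `h z = 0`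
leaves the quadratic `3w² − 2m²w − m²(m² + μ)` in `w = z²`. Its only nonnegative root is
`w₊ = (m² + m√(4m² + 3μ))/3 ≥ m²`, so `z = ±√w₊`, and `α = 4z(w₊ − m²)` is negative only for
`z = −√w₊`, where it equals `α_m(μ)`.
-/

open Real

theorem deriv_hQuartic (m : ℕ) (μ α z : ℝ) :
    deriv (hQuartic m μ α) z = 4 * z ^ 3 - 4 * (m : ℝ) ^ 2 * z - α := by
  refine HasDerivAt.deriv ?_
  convert ((((hasDerivAt_pow 4 z).sub ((hasDerivAt_pow 2 z).const_mul (2 * (m : ℝ) ^ 2))).sub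
    ((hasDerivAt_id z).const_mul α)).add_const ((m : ℝ) ^ 4)).add_const (μ * (m : ℝ) ^ 2) using 1
  · ext x
    simp only [hQuartic, Pi.sub_apply, id]
  · norm_num
    ring

theorem hQuartic_eq_zero_and_deriv_eq_zero_iff (m : ℕ) (μ α z : ℝ) :
    hQuartic m μ α z = 0 ∧ deriv (hQuartic m μ α) z = 0 ↔
      α = 4 * z * (z ^ 2 - (m : ℝ) ^ 2) ∧
        3 * z ^ 4 - 2 * (m : ℝ) ^ 2 * z ^ 2 - (m : ℝ) ^ 2 * ((m : ℝ) ^ 2 + μ) = 0 := by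
  rw [deriv_hQuartic, hQuartic]
  constructor
  · rintro ⟨h, h'⟩
    exact ⟨by linear_combination -h', by linear_combination -h + z * h'⟩
  · rintro ⟨h, h'⟩
    exact ⟨by linear_combination -h' - z * h, by linear_combination -h⟩

noncomputable def doubleRootSq (m : ℕ) (μ : ℝ) : ℝ :=
  ((m : ℝ) ^ 2 + m * √(4 * (m : ℝ) ^ 2 + 3 * μ)) / 3

theorem doubleRootSq_nonneg (m : ℕ) (μ : ℝ) : 0 ≤ doubleRootSq m μ := by
  unfold doubleRootSq; positivity

theorem two_mul_le_sqrt_four_mul_sq_add (x : ℝ) {μ : ℝ} (hμ : 0 ≤ μ) :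
    2 * x ≤ √(4 * x ^ 2 + 3 * μ) :=
  le_sqrt_of_sq_le (by nlinarith)

theorem sq_le_doubleRootSq (m : ℕ) {μ : ℝ} (hμ : 0 ≤ μ) : (m : ℝ) ^ 2 ≤ doubleRootSq m μ := by
  unfold doubleRootSq
  nlinarith [two_mul_le_sqrt_four_mul_sq_add (m : ℝ) hμ, (Nat.cast_nonneg m : (0 : ℝ) ≤ m)]

theorem alphaCrit_eq (m : ℕ) (μ : ℝ) :
    alphaCrit m μ = -4 * √(doubleRootSq m μ) * (doubleRootSq m μ - (m : ℝ) ^ 2) := by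
  have hsplit : √((m : ℝ) ^ 2 + m * √(4 * (m : ℝ) ^ 2 + 3 * μ)) = √3 * √(doubleRootSq m μ) := by
    rw [← sqrt_mul zero_le_three, doubleRootSq, mul_div_cancel₀ _ three_ne_zero]
  rw [alphaCrit, hsplit, doubleRootSq]
  field_simp
  ring

theorem resolvent_eq_zero_iff (m : ℕ) {μ : ℝ} (hμ : 0 ≤ μ) (z : ℝ) :
    3 * z ^ 4 - 2 * (m : ℝ) ^ 2 * z ^ 2 - (m : ℝ) ^ 2 * ((m : ℝ) ^ 2 + μ) = 0 ↔
      z ^ 2 = doubleRootSq m μ := by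
  have hs := two_mul_le_sqrt_four_mul_sq_add (m : ℝ) hμ
  have hs2 : √(4 * (m : ℝ) ^ 2 + 3 * μ) ^ 2 = 4 * (m : ℝ) ^ 2 + 3 * μ := sq_sqrt (by positivity)
  have hfactor : 3 * z ^ 4 - 2 * (m : ℝ) ^ 2 * z ^ 2 - (m : ℝ) ^ 2 * ((m : ℝ) ^ 2 + μ) =
      3 * (z ^ 2 - doubleRootSq m μ) *
        (z ^ 2 - ((m : ℝ) ^ 2 - m * √(4 * (m : ℝ) ^ 2 + 3 * μ)) / 3) := by
    rw [doubleRootSq]; linear_combination ((m : ℝ) ^ 2 / 3) * hs2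
  rw [hfactor]
  constructor
  · intro h
    rcases mul_eq_zero.1 h with h | h
    · linarith
    · have hm : (m : ℝ) = 0 := by nlinarith [sq_nonneg z, sq_nonneg (m : ℝ)]
      have hz : z ^ 2 = 0 := by nlinarith [sq_nonneg z]
      rw [hz, doubleRootSq, hm]; ring
  · intro h; rw [h]; ring

theorem alphaCrit_unique_repeated_root (m : ℕ) (μ : ℝ) (hμ : 0 < μ)
    (α : ℝ) (hα : α < 0) :
    (∃ z : ℝ, hQuartic m μ α z = 0 ∧ deriv (hQuartic m μ α) z = 0) ↔ α = alphaCrit m μ := by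
  simp_rw [hQuartic_eq_zero_and_deriv_eq_zero_iff, resolvent_eq_zero_iff m hμ.le, alphaCrit_eq]
  have hw := sq_le_doubleRootSq m hμ.le
  set w := doubleRootSq m μ
  have hr : √w ^ 2 = w := sq_sqrt (doubleRootSq_nonneg m μ)
  constructor
  · rintro ⟨z, rfl, hz⟩
    rcases sq_eq_sq_iff_eq_or_eq_neg.1 (hz.trans hr.symm) with rfl | rfl
    · nlinarith [sqrt_nonneg w]
    · rw [hz]; ring
  · intro h
    exact ⟨-√w, by rw [h, neg_sq, hr]; ring, by rw [neg_sq, hr]⟩
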